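/- Let A be a 2×2 real matrix with det A < 0 that is not a real scalar multiple of an orthogonal matrix, let R_φ = [[cos φ, −sin φ],[sin φ, cos φ]], and let u(θ) = (cos θ, sin θ). Then (1/(2π)) · ∫₀^{2π} log ρ(R_φ · A) dφ > (1/(2π)) · ∫₀^{2π} log ‖A·u(θ)‖ dθ, where ρ(B) denotes the spectral radius of B. -/

import Mathlib

/-- The unit vector `(cos θ, sin θ)` in `ℝ²`. -/
noncomputable def unitVec (θ : ℝ) : Fin 2 → ℝ := ![Real.cos θ, Real.sin θ]

/-- Regard a pair of reals as a vector of the Euclidean plane (with the Euclidean norm). -/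
noncomputable def toE2 (v : Fin 2 → ℝ) : EuclideanSpace ℝ (Fin 2) :=
  (WithLp.equiv 2 (Fin 2 → ℝ)).symm v

/-- The spectral radius of a 2×2 real matrix: the maximum modulus of its complex
eigenvalues. -/
noncomputable def specRadR (A : Matrix (Fin 2) (Fin 2) ℝ) : ℝ :=
  (spectralRadius ℂ (A.map Complex.ofReal)).toReal

/-- The rotation matrix by angle `φ`. -/
noncomputable def rotMat (φ : ℝ) : Matrix (Fin 2) (Fin 2) ℝ :=
  !![Real.cos φ, -Real.sin φ; Real.sin φ, Real.cos φ]

open Matrix Real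

/- ## Auxiliary lemmas -/

lemma spec2 (B : Matrix (Fin 2) (Fin 2) ℂ) (μ : ℂ) :
    μ ∈ spectrum ℂ B ↔ μ^2 - B.trace * μ + B.det = 0 := by
  rw [spectrum.mem_iff]
  rw [Matrix.isUnit_iff_isUnit_det, isUnit_iff_ne_zero, not_not]
  constructor
  · intro h
    rw [← h]
    simp [Matrix.det_fin_two, Matrix.trace_fin_two, Matrix.algebraMap_matrix_apply]
    ring
  · intro h
    rw [Matrix.det_fin_two, Matrix.trace_fin_two] at *
    simp [Matrix.algebraMap_matrix_apply]
    linear_combination h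

lemma trace_map2 (A : Matrix (Fin 2) (Fin 2) ℝ) :
    (A.map Complex.ofReal).trace = (A.trace : ℂ) := by
  simp [Matrix.trace_fin_two, Matrix.map_apply]

lemma det_map2 (A : Matrix (Fin 2) (Fin 2) ℝ) :
    (A.map Complex.ofReal).det = (A.det : ℂ) := by
  simp [Matrix.det_fin_two, Matrix.map_apply]

lemma specRad_formula (A : Matrix (Fin 2) (Fin 2) ℝ) (hd : A.det < 0) :
    specRadR A = (|A.trace| + Real.sqrt (A.trace^2 - 4*A.det)) / 2 := by
  set t := A.trace with ht
  set d := A.det with hd'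
  have hD : (0:ℝ) < t^2 - 4*d := by nlinarith [sq_nonneg t]
  set D := Real.sqrt (t^2 - 4*d) with hDdef
  have hD2 : D^2 = t^2 - 4*d := Real.sq_sqrt hD.le
  have hDt : |t| < D := by
    rw [← Real.sqrt_sq_eq_abs]
    apply Real.sqrt_lt_sqrt (sq_nonneg t)
    nlinarith
  set l1 : ℝ := (t + D)/2 with hl1
  set l2 : ℝ := (t - D)/2 with hl2
  have hspec : spectrum ℂ (A.map Complex.ofReal) = {(l1:ℂ), (l2:ℂ)} := by
    ext μ
    rw [spec2, trace_map2, det_map2]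
    have key : μ^2 - (t:ℂ)*μ + (d:ℂ) = (μ - l1) * (μ - l2) := by
      have hc : ((D:ℂ))^2 = (t:ℂ)^2 - 4*(d:ℂ) := by exact_mod_cast hD2
      push_cast [hl1, hl2]
      linear_combination hc/4
    rw [key, mul_eq_zero, sub_eq_zero, sub_eq_zero]
    simp [Set.mem_insert_iff]
  have : spectralRadius ℂ (A.map Complex.ofReal)
      = max (‖(l1:ℂ)‖₊ : ENNReal) (‖(l2:ℂ)‖₊ : ENNReal) := by
    rw [spectralRadius, hspec]
    exact iSup_pair
  rw [specRadR, this]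
  rw [← ENNReal.coe_max, ENNReal.coe_toReal]
  have hnorm : ∀ x : ℝ, ‖((x:ℂ))‖₊ = ‖x‖₊ := fun x => by simp
  rw [hnorm, hnorm]
  have hcoe : ((max ‖l1‖₊ ‖l2‖₊ : NNReal) : ℝ) = max |l1| |l2| := by
    simp [NNReal.coe_max, Real.norm_eq_abs]
  rw [hcoe]
  have h1 : |l1| = (t + D)/2 := by
    rw [abs_of_nonneg]; rw [hl1]; cases abs_cases t with
    | inl h => nlinarith [h.1]
    | inr h => nlinarith [h.1]
  have h2 : |l2| = (D - t)/2 := by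
    rw [abs_of_nonpos]; rw [hl2]; ring
    rw [hl2]; cases abs_cases t with
    | inl h => nlinarith [h.1]
    | inr h => nlinarith [h.1]
  rw [h1, h2]
  cases abs_cases t with
  | inl h => rw [h.1]; rw [max_eq_left]; ring; nlinarith [h.2]
  | inr h => rw [h.1]; rw [max_eq_right]; ring; nlinarith [h.2]

lemma key_ineq (s1 s2 c s : ℝ) (h2 : 0 < s2) (h12 : s2 ≤ s1) (hcs : c^2 + s^2 = 1) :
    Real.sqrt (s1^2*c^2 + s2^2*s^2)
      ≤ ((s1 - s2)*|c| + Real.sqrt ((s1 - s2)^2*c^2 + 4*(s1*s2)))/2 := by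
  have h1 : 0 < s1 := lt_of_lt_of_le h2 h12
  set R := Real.sqrt (s1^2*c^2 + s2^2*s^2) with hR
  have hRnn : 0 ≤ R := Real.sqrt_nonneg _
  have hR2 : R^2 = s1^2*c^2 + s2^2*s^2 := Real.sq_sqrt (by positivity)
  rw [le_div_iff₀ (by norm_num : (0:ℝ) < 2)]
  have main : R * 2 - (s1 - s2)*|c| ≤ Real.sqrt ((s1 - s2)^2*c^2 + 4*(s1*s2)) := by
    rcases le_or_gt (R * 2 - (s1 - s2)*|c|) 0 with h | h
    · exact le_trans h (Real.sqrt_nonneg _)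
    · rw [show (s1 - s2)^2*c^2 + 4*(s1*s2) = Real.sqrt ((s1 - s2)^2*c^2 + 4*(s1*s2))^2 from
        (Real.sq_sqrt (by positivity)).symm] at *
      rw [← Real.sqrt_sq h.le]
      apply Real.sqrt_le_sqrt
      rw [Real.sq_sqrt (by positivity)]
      have hcRle : s1*c^2 - s2*s^2 ≤ |c| * R := by
        rcases le_or_gt (s1*c^2 - s2*s^2) 0 with h' | h'
        · exact le_trans h' (by positivity)
        · have : (s1*c^2 - s2*s^2)^2 ≤ (|c| * R)^2 := by
            rw [mul_pow, sq_abs, hR2]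
            nlinarith [mul_nonneg (le_of_lt h') (mul_nonneg h2.le (sq_nonneg s)),
              mul_nonneg (mul_nonneg (mul_nonneg h1.le h2.le) (sq_nonneg c)) (sq_nonneg s),
              mul_nonneg (mul_nonneg (mul_nonneg h2.le h2.le) (sq_nonneg c)) (sq_nonneg s)]
          exact le_of_pow_le_pow_left₀ (by norm_num) (by positivity) this
      have hc2 : |c|^2 = c^2 := sq_abs c
      nlinarith [mul_nonneg (sub_nonneg.2 h12) (abs_nonneg c), hRnn, hR2]
  nlinarith [Real.sqrt_nonneg ((s1 - s2)^2*c^2 + 4*(s1*s2))]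

noncomputable def Gfun (M p : ℝ) (x : ℝ) : ℝ :=
  Real.log ((M * |Real.cos x| + Real.sqrt (M^2 * Real.cos x ^ 2 + 4*p)) / 2)

noncomputable def Hfun (al r : ℝ) (x : ℝ) : ℝ :=
  Real.log (Real.sqrt (al + r * Real.cos (2*x)))

lemma Gfun_inner_pos (M p : ℝ) (hM : 0 ≤ M) (hp : 0 < p) (x : ℝ) :
    0 < (M * |Real.cos x| + Real.sqrt (M^2 * Real.cos x ^ 2 + 4*p)) / 2 := by
  have h1 : 0 ≤ M * |Real.cos x| := by positivity
  have h2 : 0 < Real.sqrt (M^2 * Real.cos x ^ 2 + 4*p) := Real.sqrt_pos.2 (by positivity)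
  linarith

lemma Hfun_inner_pos (al r : ℝ) (hr : 0 ≤ r) (hral : r < al) (x : ℝ) :
    0 < al + r * Real.cos (2*x) := by
  nlinarith [Real.neg_one_le_cos (2*x), Real.cos_le_one (2*x)]

lemma Gfun_continuous (M p : ℝ) (hM : 0 ≤ M) (hp : 0 < p) : Continuous (Gfun M p) := by
  apply Continuous.log
  · fun_prop
  · intro x
    exact ne_of_gt (Gfun_inner_pos M p hM hp x)

lemma Hfun_continuous (al r : ℝ) (hr : 0 ≤ r) (hral : r < al) : Continuous (Hfun al r) := by
  apply Continuous.log
  · fun_prop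
  · intro x
    exact ne_of_gt (Real.sqrt_pos.2 (Hfun_inner_pos al r hr hral x))

lemma Gfun_periodic (M p : ℝ) : Function.Periodic (Gfun M p) (2*Real.pi) := by
  intro x
  simp [Gfun, Real.cos_add_two_pi]

lemma Hfun_periodic (al r : ℝ) : Function.Periodic (Hfun al r) (2*Real.pi) := by
  intro x
  unfold Hfun
  rw [show 2*(x + 2*Real.pi) = (2*x + 2*Real.pi) + 2*Real.pi by ring,
    Real.cos_add_two_pi, Real.cos_add_two_pi]

lemma Hfun_as_s (s1 s2 al r x : ℝ) (hal : s1^2 + s2^2 = 2*al) (hr : s1^2 - s2^2 = 2*r) :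
    al + r * Real.cos (2*x) = s1^2*(Real.cos x)^2 + s2^2*(Real.sin x)^2 := by
  rw [Real.cos_two_mul x]
  have h := Real.sin_sq_add_cos_sq x
  linear_combination (hr - hal)/2 - (Real.cos x)^2 * hr - s2^2 * h

lemma pointwise_le (s1 s2 al r : ℝ) (h2 : 0 < s2) (h12 : s2 ≤ s1)
    (hal : s1^2 + s2^2 = 2*al) (hr : s1^2 - s2^2 = 2*r) (x : ℝ) :
    Hfun al r x ≤ Gfun (s1-s2) (s1*s2) x := by
  unfold Hfun Gfun
  rw [Hfun_as_s s1 s2 al r x hal hr]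
  have h := Real.sin_sq_add_cos_sq x
  have hpos : 0 < s1^2*(Real.cos x)^2 + s2^2*(Real.sin x)^2 := by
    have key : s1^2*(Real.cos x)^2 + s2^2*(Real.sin x)^2 - s2^2
        = (s1^2 - s2^2)*(Real.cos x)^2 := by linear_combination s2^2 * h
    nlinarith [mul_nonneg (by nlinarith : (0:ℝ) ≤ s1^2 - s2^2) (sq_nonneg (Real.cos x)),
      pow_pos h2 2]
  apply Real.log_le_log (Real.sqrt_pos.2 hpos)
  exact key_ineq s1 s2 (Real.cos x) (Real.sin x) h2 h12 (by linarith)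

lemma pointwise_lt (s1 s2 al r : ℝ) (h2 : 0 < s2) (h12 : s2 < s1)
    (hal : s1^2 + s2^2 = 2*al) (hr : s1^2 - s2^2 = 2*r) :
    Hfun al r (Real.pi/2) < Gfun (s1-s2) (s1*s2) (Real.pi/2) := by
  unfold Hfun Gfun
  rw [show 2*(Real.pi/2) = Real.pi by ring, Real.cos_pi, Real.cos_pi_div_two]
  have hH : al + r * (-1) = s2^2 := by linarith
  rw [hH, Real.sqrt_sq h2.le]
  have hG : (s1-s2) * |(0:ℝ)| + Real.sqrt ((s1-s2)^2 * (0:ℝ)^2 + 4*(s1*s2)) 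
      = 2 * Real.sqrt (s1*s2) := by
    rw [abs_zero, mul_zero, zero_add]
    rw [show (s1-s2)^2 * (0:ℝ)^2 + 4*(s1*s2) = (2:ℝ)^2 * (s1*s2) by ring]
    rw [Real.sqrt_mul (by norm_num), Real.sqrt_sq (by norm_num : (0:ℝ) ≤ 2)]
  rw [hG]
  rw [show 2 * Real.sqrt (s1*s2) / 2 = Real.sqrt (s1*s2) by ring]
  apply Real.log_lt_log h2
  have : s2 = Real.sqrt (s2^2) := (Real.sqrt_sq h2.le).symm
  rw [this]
  apply Real.sqrt_lt_sqrt (sq_nonneg s2)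
  nlinarith

lemma polar_decomp (a b : ℝ) : ∃ ψ : ℝ, a = Real.sqrt (a^2+b^2) * Real.cos ψ
    ∧ b = Real.sqrt (a^2+b^2) * Real.sin ψ := by
  use Complex.arg ⟨a, b⟩
  have habs : ‖(⟨a, b⟩ : ℂ)‖ = Real.sqrt (a^2+b^2) := by
    rw [Complex.norm_def, Complex.normSq_mk]; ring_nf
  have h := Complex.norm_mul_cos_add_sin_mul_I ⟨a, b⟩
  have h1 := congrArg Complex.re h
  have h2 := congrArg Complex.im h
  simp [Complex.add_re, Complex.add_im, Complex.mul_re, Complex.mul_im, habs] at h1 h2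
  exact ⟨h1.symm, h2.symm⟩

lemma det_rot_mul (φ : ℝ) (A : Matrix (Fin 2) (Fin 2) ℝ) : (rotMat φ * A).det = A.det := by
  rw [Matrix.det_mul]
  simp [rotMat, Matrix.det_fin_two_of]
  have h := Real.sin_sq_add_cos_sq φ
  linear_combination A.det * h

lemma trace_rot_mul (φ : ℝ) (A : Matrix (Fin 2) (Fin 2) ℝ) : (rotMat φ * A).trace
    = (A 0 0 + A 1 1) * Real.cos φ + (A 0 1 - A 1 0) * Real.sin φ := by
  simp [rotMat, Matrix.trace_fin_two, Matrix.mul_apply, Matrix.vecMul, dotProduct,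
    Fin.sum_univ_two]
  ring

lemma norm_toE2 (v : Fin 2 → ℝ) : ‖toE2 v‖ = Real.sqrt ((v 0)^2 + (v 1)^2) := by
  rw [toE2, EuclideanSpace.norm_eq]
  simp [Fin.sum_univ_two, Real.norm_eq_abs, sq_abs]

set_option maxHeartbeats 800000 in
lemma scalar_of_ab_zero (A : Matrix (Fin 2) (Fin 2) ℝ) (hA : A.det < 0)
    (hA11 : A 1 1 = -(A 0 0)) (hA01 : A 0 1 = A 1 0) :
    ∃ c : ℝ, ∃ Q : Matrix (Fin 2) (Fin 2) ℝ, Q.transpose * Q = 1 ∧ A = c • Q := by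
  set al : ℝ := A 0 0^2 + A 1 0^2 with hal'
  have halpos : 0 < al := by
    rcases lt_or_ge 0 al with h | h
    · exact h
    · exfalso
      have h0 : A 0 0 = 0 := by nlinarith [sq_nonneg (A 0 0), sq_nonneg (A 1 0)]
      have h1 : A 1 0 = 0 := by nlinarith [sq_nonneg (A 0 0), sq_nonneg (A 1 0)]
      rw [Matrix.det_fin_two, hA11, hA01, h0, h1] at hA
      norm_num at hA
  refine ⟨Real.sqrt al, (Real.sqrt al)⁻¹ • A, ?_, ?_⟩
  · have hATA : A.transpose * A = al • (1 : Matrix (Fin 2) (Fin 2) ℝ) := by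
      ext i j
      fin_cases i <;> fin_cases j <;>
        simp [Matrix.mul_apply, Matrix.transpose_apply, Fin.sum_univ_two,
          Matrix.one_apply, smul_eq_mul, hA11, hA01, hal'] <;>
        ring
    rw [Matrix.transpose_smul, Matrix.smul_mul, Matrix.mul_smul, hATA,
      smul_smul, smul_smul]
    have hsq : Real.sqrt al * Real.sqrt al = al := Real.mul_self_sqrt halpos.le
    have hone : (Real.sqrt al)⁻¹ * (Real.sqrt al)⁻¹ * al = 1 := by
      rw [← mul_inv, hsq]
      exact inv_mul_cancel₀ (ne_of_gt halpos)
    rw [hone, one_smul]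
  · rw [smul_smul]
    rw [mul_inv_cancel₀ (ne_of_gt (Real.sqrt_pos.2 halpos)), one_smul]


set_option maxHeartbeats 2000000 in
/-- For a 2×2 real matrix `A` with `det A < 0` that is not a real scalar multiple of an
orthogonal matrix,
`(1/(2π)) ∫₀^{2π} log ρ(R_φ A) dφ > (1/(2π)) ∫₀^{2π} log ‖A·u(θ)‖ dθ`. -/
theorem so2_coset_strict_inequality (A : Matrix (Fin 2) (Fin 2) ℝ) (hA : A.det < 0)
    (hnotscalar : ¬ ∃ c : ℝ, ∃ Q : Matrix (Fin 2) (Fin 2) ℝ,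
      Q.transpose * Q = 1 ∧ A = c • Q) :
    (1 / (2 * Real.pi)) *
        ∫ φ in (0:ℝ)..(2 * Real.pi), Real.log (specRadR (rotMat φ * A)) >
      (1 / (2 * Real.pi)) *
        ∫ θ in (0:ℝ)..(2 * Real.pi), Real.log ‖toE2 (A.mulVec (unitVec θ))‖ := by
  have hπ : 0 < Real.pi := Real.pi_pos
  set a : ℝ := A 0 0 + A 1 1 with ha
  set b : ℝ := A 0 1 - A 1 0 with hb
  set p : ℝ := -A.det with hp'
  have hp : 0 < p := by simp [hp']; linarith
  have hpdet : p = A 0 1 * A 1 0 - A 0 0 * A 1 1 := by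
    rw [hp', Matrix.det_fin_two]; ring
  set al : ℝ := (A 0 0^2 + A 1 0^2 + A 0 1^2 + A 1 1^2)/2 with hal'
  have hid1 : a^2 + b^2 = 2*al - 2*p := by rw [ha, hb, hal', hpdet]; ring
  -- M > 0
  have hMpos : 0 < a^2 + b^2 := by
    rcases lt_or_ge 0 (a^2+b^2) with h | h
    · exact h
    · exfalso
      have hab : a = 0 ∧ b = 0 := by
        constructor <;> nlinarith [sq_nonneg a, sq_nonneg b]
      apply hnotscalar
      apply scalar_of_ab_zero A hA
      · have := hab.1; rw [ha] at this; linarith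
      · have := hab.2; rw [hb] at this; linarith
  set M : ℝ := Real.sqrt (a^2 + b^2) with hM'
  have hM0 : 0 < M := Real.sqrt_pos.2 hMpos
  have hMsq : M^2 = a^2 + b^2 := Real.sq_sqrt hMpos.le
  have halp : p < al := by nlinarith
  set r : ℝ := Real.sqrt (al^2 - p^2) with hr'
  have hrsq : r^2 = al^2 - p^2 := Real.sq_sqrt (by nlinarith)
  have hrpos : 0 < r := Real.sqrt_pos.2 (by nlinarith)
  have hral : r < al := by nlinarith [Real.sqrt_nonneg (al^2-p^2)]
  set s1 : ℝ := Real.sqrt (al + r) with hs1'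
  set s2 : ℝ := Real.sqrt (al - r) with hs2'
  have hs1sq : s1^2 = al + r := Real.sq_sqrt (by linarith)
  have hs2sq : s2^2 = al - r := Real.sq_sqrt (by linarith)
  have hs2pos : 0 < s2 := Real.sqrt_pos.2 (by linarith)
  have hs1pos : 0 < s1 := Real.sqrt_pos.2 (by linarith)
  have hs12 : s2 < s1 := by
    rw [hs1', hs2']; exact Real.sqrt_lt_sqrt (by linarith) (by linarith)
  have hss : s1 * s2 = p := by
    rw [hs1', hs2', ← Real.sqrt_mul (by linarith)]
    rw [show (al + r)*(al - r) = al^2 - r^2 by ring, hrsq]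
    rw [show al^2 - (al^2 - p^2) = p^2 by ring]
    exact Real.sqrt_sq hp.le
  have hMs : M = s1 - s2 := by
    have h1 : M^2 = (s1 - s2)^2 := by
      rw [hMsq, hid1]; nlinarith [hs1sq, hs2sq, hss]
    nlinarith [hM0, hs12]
  have hals : s1^2 + s2^2 = 2*al := by linarith
  have hrs : s1^2 - s2^2 = 2*r := by linarith
  -- phases
  obtain ⟨ψ, hψ1, hψ2⟩ := polar_decomp a b
  rw [← hM'] at hψ1 hψ2
  set β : ℝ := (A 0 0^2 + A 1 0^2 - A 0 1^2 - A 1 1^2)/2 with hβ'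
  set γ : ℝ := A 0 0 * A 0 1 + A 1 0 * A 1 1 with hγ'
  have hbg : β^2 + γ^2 = al^2 - p^2 := by rw [hβ', hγ', hal', hpdet]; ring
  have hrbg : r = Real.sqrt (β^2 + γ^2) := by rw [hr', hbg]
  obtain ⟨χ, hχ1, hχ2⟩ := polar_decomp β γ
  rw [← hrbg] at hχ1 hχ2
  clear_value a b p al M r s1 s2 β γ
  -- integrand 1
  have hG : ∀ φ : ℝ, Real.log (specRadR (rotMat φ * A)) = Gfun M p (φ - ψ) := by
    intro φ
    have hdet : (rotMat φ * A).det = A.det := det_rot_mul φ A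
    have hdet' : (rotMat φ * A).det < 0 := by rw [hdet]; exact hA
    rw [specRad_formula _ hdet', hdet, trace_rot_mul]
    have hT : a * Real.cos φ + b * Real.sin φ = M * Real.cos (φ - ψ) := by
      rw [Real.cos_sub, hψ1, hψ2]; ring
    rw [← ha, ← hb, hT, Gfun]
    rw [abs_mul, abs_of_nonneg hM0.le]
    congr 2
    rw [mul_pow]
    rw [show A.det = -p by rw [hp']; ring]
    ring
  -- integrand 2
  have hH : ∀ θ : ℝ, Real.log ‖toE2 (A.mulVec (unitVec θ))‖ = Hfun al r (θ - χ/2) := by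
    intro θ
    have hv0 : A.mulVec (unitVec θ) 0 = A 0 0 * Real.cos θ + A 0 1 * Real.sin θ := by
      simp [Matrix.mulVec, dotProduct, Fin.sum_univ_two, unitVec]
    have hv1 : A.mulVec (unitVec θ) 1 = A 1 0 * Real.cos θ + A 1 1 * Real.sin θ := by
      simp [Matrix.mulVec, dotProduct, Fin.sum_univ_two, unitVec]
    rw [norm_toE2, hv0, hv1, Hfun]
    have h := Real.sin_sq_add_cos_sq θ
    have hc2 : Real.cos (2*(θ - χ/2))
        = Real.cos (2*θ) * Real.cos χ + Real.sin (2*θ) * Real.sin χ := by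
      rw [show 2*(θ - χ/2) = 2*θ - χ by ring, Real.cos_sub]
    have step1 : al + r * Real.cos (2*(θ - χ/2))
        = al + β*(2*(Real.cos θ)^2-1) + γ*(2*Real.sin θ*Real.cos θ) := by
      rw [hχ1, hχ2, hc2, Real.cos_two_mul, Real.sin_two_mul]; ring
    have step2 : al + β*(2*(Real.cos θ)^2-1) + γ*(2*Real.sin θ*Real.cos θ)
        = (A 0 0 * Real.cos θ + A 0 1 * Real.sin θ)^2
          + (A 1 0 * Real.cos θ + A 1 1 * Real.sin θ)^2 := by
      rw [hal', hβ', hγ']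
      linear_combination (-(A 0 1^2 + A 1 1^2)) * h
    rw [← (step1.trans step2)]
  -- rewrite integrals
  have hGint : (∫ φ in (0:ℝ)..(2 * Real.pi), Real.log (specRadR (rotMat φ * A)))
      = ∫ x in (0:ℝ)..(2 * Real.pi), Gfun M p x := by
    simp only [hG]
    rw [intervalIntegral.integral_comp_sub_right (Gfun M p) ψ]
    rw [show (0:ℝ) - ψ = -ψ by ring, show 2*Real.pi - ψ = -ψ + 2*Real.pi by ring]
    rw [(Gfun_periodic M p).intervalIntegral_add_eq (-ψ) 0, zero_add]
  have hHint : (∫ θ in (0:ℝ)..(2 * Real.pi), Real.log ‖toE2 (A.mulVec (unitVec θ))‖)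
      = ∫ x in (0:ℝ)..(2 * Real.pi), Hfun al r x := by
    simp only [hH]
    rw [intervalIntegral.integral_comp_sub_right (Hfun al r) (χ/2)]
    rw [show (0:ℝ) - χ/2 = -(χ/2) by ring, show 2*Real.pi - χ/2 = -(χ/2) + 2*Real.pi by ring]
    rw [(Hfun_periodic al r).intervalIntegral_add_eq (-(χ/2)) 0, zero_add]
  rw [hGint, hHint, gt_iff_lt]
  apply mul_lt_mul_of_pos_left _ (by positivity : (0:ℝ) < 1/(2*Real.pi))
  -- strict integral inequality
  have hGfun_eq : Gfun M p = Gfun (s1 - s2) (s1*s2) := by rw [hMs, hss]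
  rw [hGfun_eq]
  apply intervalIntegral.integral_lt_integral_of_continuousOn_of_le_of_exists_lt
    (by linarith : (0:ℝ) < 2*Real.pi)
  · exact (Hfun_continuous al r hrpos.le hral).continuousOn
  · exact (Gfun_continuous (s1-s2) (s1*s2) (by linarith) (hss ▸ hp)).continuousOn
  · intro x _
    exact pointwise_le s1 s2 al r hs2pos hs12.le hals hrs x
  · refine ⟨Real.pi/2, ⟨by linarith, by linarith⟩, ?_⟩
    exact pointwise_lt s1 s2 al r hs2pos hs12 hals hrs
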